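/- Let d ≥ 1, let W be a d×d complex matrix, and let u ∈ ℂ^d and θ ∈ ℝ satisfy W·u = e^{iθ}·u. Define U₀ := |+⟩⟨+| ⊗ 𝟙_d + |−⟩⟨−| ⊗ W and, for φ ∈ ℝ, U_φ := (e^{−iφσz/2} ⊗ 𝟙_d) · U₀ · (e^{iφσz/2} ⊗ 𝟙_d), where e^{±iφσz/2} is the diagonal matrix diag(e^{±iφ/2}, e^{∓iφ/2}). Then for every v ∈ ℂ², U_φ·(v ⊗ u) = e^{iθ/2} · (R_φ(θ)·v) ⊗ u. -/

import Mathlib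

open Real Complex Matrix Kronecker

noncomputable def Rot (φ θ : ℝ) : Matrix (Fin 2) (Fin 2) ℂ :=
  !![(Real.cos (θ/2) : ℂ), -Complex.I * Complex.exp (-Complex.I * φ) * Real.sin (θ/2);
     -Complex.I * Complex.exp (Complex.I * φ) * Real.sin (θ/2), (Real.cos (θ/2) : ℂ)]

noncomputable def ketPlus : Fin 2 → ℂ := ![(1 / Real.sqrt 2 : ℝ), (1 / Real.sqrt 2 : ℝ)]
noncomputable def ketMinus : Fin 2 → ℂ := ![(1 / Real.sqrt 2 : ℝ), (-(1 / Real.sqrt 2) : ℝ)]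
noncomputable def projPlus : Matrix (Fin 2) (Fin 2) ℂ := vecMulVec ketPlus (star ketPlus)
noncomputable def projMinus : Matrix (Fin 2) (Fin 2) ℂ := vecMulVec ketMinus (star ketMinus)

/-- `e^{−iφσz/2} = diag(e^{−iφ/2}, e^{iφ/2})`. -/
noncomputable def expZ (φ : ℝ) : Matrix (Fin 2) (Fin 2) ℂ :=
  !![Complex.exp (-Complex.I * φ / 2), 0; 0, Complex.exp (Complex.I * φ / 2)]

def vecKron {d : ℕ} (v : Fin 2 → ℂ) (u : Fin d → ℂ) : Fin 2 × Fin d → ℂ :=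
  fun p => v p.1 * u p.2

/-!
On vectors `v ⊗ u` with `W u = e^{iθ} u`, the controlled gate `U₀` acts as
`|+⟩⟨+| + e^{iθ} |−⟩⟨−| = e^{iθ/2} (cos (θ/2) - i sin (θ/2) σx) = e^{iθ/2} R₀(θ)` on the first
factor, and conjugating by `e^{−iφσz/2}` multiplies the off-diagonal entries by `e^{∓iφ}`,
turning `R₀(θ)` into `R_φ(θ)`.
-/

lemma kronecker_mulVec_vecKron {d : ℕ} (A : Matrix (Fin 2) (Fin 2) ℂ)
    (B : Matrix (Fin d) (Fin d) ℂ) (v : Fin 2 → ℂ) (u : Fin d → ℂ) :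
    (A ⊗ₖ B) *ᵥ vecKron v u = vecKron (A *ᵥ v) (B *ᵥ u) := by
  funext p
  simp only [mulVec, dotProduct, vecKron, kroneckerMap_apply, Fintype.sum_prod_type,
    Finset.sum_mul_sum]
  exact Finset.sum_congr rfl fun _ _ => Finset.sum_congr rfl fun _ _ => by ring

lemma vecKron_add_left {d : ℕ} (v w : Fin 2 → ℂ) (u : Fin d → ℂ) :
    vecKron (v + w) u = vecKron v u + vecKron w u := by
  funext p
  simp only [vecKron, Pi.add_apply, add_mul]

lemma vecKron_smul_left {d : ℕ} (c : ℂ) (v : Fin 2 → ℂ) (u : Fin d → ℂ) :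
    vecKron (c • v) u = c • vecKron v u := by
  funext p
  simp only [vecKron, Pi.smul_apply, smul_eq_mul, mul_assoc]

lemma vecKron_smul_right {d : ℕ} (c : ℂ) (v : Fin 2 → ℂ) (u : Fin d → ℂ) :
    vecKron v (c • u) = vecKron (c • v) u := by
  funext p
  simp only [vecKron, Pi.smul_apply, smul_eq_mul]
  ring

lemma kronecker_one_mulVec_vecKron {d : ℕ} (A : Matrix (Fin 2) (Fin 2) ℂ) (v : Fin 2 → ℂ)
    (u : Fin d → ℂ) :
    (A ⊗ₖ (1 : Matrix (Fin d) (Fin d) ℂ)) *ᵥ vecKron v u = vecKron (A *ᵥ v) u := by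
  rw [kronecker_mulVec_vecKron, one_mulVec]

lemma kronecker_one_add_kronecker_mulVec_vecKron_of_mulVec_eq_smul {d : ℕ}
    (A B : Matrix (Fin 2) (Fin 2) ℂ) {W : Matrix (Fin d) (Fin d) ℂ} {u : Fin d → ℂ} {c : ℂ}
    (hu : W *ᵥ u = c • u) (v : Fin 2 → ℂ) :
    (A ⊗ₖ (1 : Matrix (Fin d) (Fin d) ℂ) + B ⊗ₖ W) *ᵥ vecKron v u =
      vecKron ((A + c • B) *ᵥ v) u := by
  rw [add_mulVec, kronecker_one_mulVec_vecKron, kronecker_mulVec_vecKron, hu,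
    vecKron_smul_right, ← smul_mulVec, ← vecKron_add_left, ← add_mulVec]

lemma inv_sqrt_two_mul_self : ((√2 : ℝ) : ℂ)⁻¹ * ((√2 : ℝ) : ℂ)⁻¹ = 2⁻¹ := by
  rw [← mul_inv, ← Complex.ofReal_mul, Real.mul_self_sqrt zero_le_two]; norm_num

lemma projPlus_eq : projPlus = (2⁻¹ : ℂ) • !![1, 1; 1, 1] := by
  ext i j
  fin_cases i <;> fin_cases j <;> simp [projPlus, ketPlus, vecMulVec, inv_sqrt_two_mul_self]

lemma projMinus_eq : projMinus = (2⁻¹ : ℂ) • !![1, -1; -1, 1] := by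
  ext i j
  fin_cases i <;> fin_cases j <;> simp [projMinus, ketMinus, vecMulVec, inv_sqrt_two_mul_self]

lemma projPlus_add_smul_projMinus (θ : ℝ) :
    projPlus + cexp (I * θ) • projMinus = cexp (I * θ / 2) • Rot 0 θ := by
  have hsq : cexp (I * θ / 2) * cexp (I * θ / 2) = cexp (I * θ) := by
    rw [← Complex.exp_add]; ring_nf
  have hinv : cexp (I * θ / 2) * cexp (-(I * θ / 2)) = 1 := by
    rw [← Complex.exp_add, add_neg_cancel, Complex.exp_zero]
  have hcos : 2 * Complex.cos (θ / 2) = cexp (I * θ / 2) + cexp (-(I * θ / 2)) := by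
    rw [Complex.two_cos]; ring_nf
  have hsin : 2 * I * Complex.sin (θ / 2) = cexp (I * θ / 2) - cexp (-(I * θ / 2)) := by
    rw [mul_comm 2, mul_assoc, Complex.two_sin]; ring_nf; rw [I_sq]; ring_nf
  rw [projPlus_eq, projMinus_eq]
  ext i j
  fin_cases i <;> fin_cases j <;> simp [Rot, Complex.ofReal_cos, Complex.ofReal_sin]
  · linear_combination (-1/2 : ℂ) * hsq - (1/2 : ℂ) * hinv - cexp (I * θ / 2) / 2 * hcos
  · linear_combination (1/2 : ℂ) * hsq - (1/2 : ℂ) * hinv + cexp (I * θ / 2) / 2 * hsin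
  · linear_combination (1/2 : ℂ) * hsq - (1/2 : ℂ) * hinv + cexp (I * θ / 2) / 2 * hsin
  · linear_combination (-1/2 : ℂ) * hsq - (1/2 : ℂ) * hinv - cexp (I * θ / 2) / 2 * hcos

lemma expZ_mul_Rot_zero_mul_expZ_neg (φ θ : ℝ) : expZ φ * Rot 0 θ * expZ (-φ) = Rot φ θ := by
  have hsq : cexp (I * φ / 2) * cexp (I * φ / 2) = cexp (I * φ) := by
    rw [← Complex.exp_add]; ring_nf
  have hsq' : cexp (-(I * φ) / 2) * cexp (-(I * φ) / 2) = cexp (-(I * φ)) := by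
    rw [← Complex.exp_add]; ring_nf
  have hinv : cexp (I * φ / 2) * cexp (-(I * φ) / 2) = 1 := by
    rw [← Complex.exp_add, ← add_div, add_neg_cancel, zero_div, Complex.exp_zero]
  ext i j
  fin_cases i <;> fin_cases j <;> simp [Rot, expZ, Matrix.mul_apply, Fin.sum_univ_two]
  · linear_combination Complex.cos (θ / 2) * hinv
  · linear_combination I * Complex.sin (θ / 2) * hsq'
  · linear_combination I * Complex.sin (θ / 2) * hsq
  · linear_combination Complex.cos (θ / 2) * hinv

theorem Uphi_action_general (d : ℕ) (W : Matrix (Fin d) (Fin d) ℂ)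
    (u : Fin d → ℂ) (θ : ℝ) (hu : W.mulVec u = Complex.exp (Complex.I * θ) • u) (φ : ℝ) :
    ∀ v : Fin 2 → ℂ,
      ((expZ φ ⊗ₖ (1 : Matrix (Fin d) (Fin d) ℂ)) *
        (projPlus ⊗ₖ (1 : Matrix (Fin d) (Fin d) ℂ) + projMinus ⊗ₖ W) *
        (expZ (-φ) ⊗ₖ (1 : Matrix (Fin d) (Fin d) ℂ))).mulVec (vecKron v u) =
        Complex.exp (Complex.I * θ / 2) • vecKron ((Rot φ θ).mulVec v) u := by
  intro v
  calc _ = (expZ φ ⊗ₖ (1 : Matrix (Fin d) (Fin d) ℂ)) *ᵥ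
          ((projPlus ⊗ₖ (1 : Matrix (Fin d) (Fin d) ℂ) + projMinus ⊗ₖ W) *ᵥ
            ((expZ (-φ) ⊗ₖ (1 : Matrix (Fin d) (Fin d) ℂ)) *ᵥ vecKron v u)) := by
        rw [mulVec_mulVec, mulVec_mulVec, Matrix.mul_assoc]
    _ = vecKron ((expZ φ * (projPlus + cexp (I * θ) • projMinus) * expZ (-φ)) *ᵥ v) u := by
        rw [kronecker_one_mulVec_vecKron,
          kronecker_one_add_kronecker_mulVec_vecKron_of_mulVec_eq_smul _ _ hu,
          kronecker_one_mulVec_vecKron, mulVec_mulVec, mulVec_mulVec]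
    _ = _ := by
        rw [projPlus_add_smul_projMinus, mul_smul_comm, smul_mul_assoc,
          expZ_mul_Rot_zero_mul_expZ_neg, smul_mulVec, vecKron_smul_left]

theorem Uphi_action (d : ℕ) (hd : 1 ≤ d) (W : Matrix (Fin d) (Fin d) ℂ)
    (u : Fin d → ℂ) (θ : ℝ) (hu : W.mulVec u = Complex.exp (Complex.I * θ) • u) (φ : ℝ) :
    ∀ v : Fin 2 → ℂ,
      ((expZ φ ⊗ₖ (1 : Matrix (Fin d) (Fin d) ℂ)) *
        (projPlus ⊗ₖ (1 : Matrix (Fin d) (Fin d) ℂ) + projMinus ⊗ₖ W) *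
        (expZ (-φ) ⊗ₖ (1 : Matrix (Fin d) (Fin d) ℂ))).mulVec (vecKron v u) =
        Complex.exp (Complex.I * θ / 2) • vecKron ((Rot φ θ).mulVec v) u :=
  Uphi_action_general d W u θ hu φ
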